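/- For every integer k ≥ 2, the unique k-critical digraph on k+1 vertices is D^±(K_{k−2}) ⊞ C⃗₃, the Dirac join of the complete biorientation of K_{k−2} with a directed 3-cycle. -/

import Mathlib

/-- A finite simple digraph with vertices drawn from `ℕ`:
no loops, no parallel arcs in the same direction (arcs form a relation),
but antiparallel arcs are allowed. -/
structure Digraph' where
  verts : Finset ℕ
  Adj : ℕ → ℕ → Prop
  adj_mem : ∀ ⦃u v⦄, Adj u v → u ∈ verts ∧ v ∈ verts
  loopless : ∀ v, ¬ Adj v v

namespace Digraph'

/-- The order (number of vertices) of a digraph. -/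
def order (D : Digraph') : ℕ := D.verts.card

/-- The number of arcs of a digraph. -/
noncomputable def numArcs (D : Digraph') : ℕ :=
  Nat.card {a : ℕ × ℕ // D.Adj a.1 a.2}

/-- The set `S` induces an acyclic subdigraph of `D` (no directed cycle inside `S`). -/
def AcyclicOn (D : Digraph') (S : Set ℕ) : Prop :=
  ∀ v, ¬ Relation.TransGen (fun a b => a ∈ S ∧ b ∈ S ∧ D.Adj a b) v v

/-- A digraph is acyclic if it contains no directed cycle. -/
def IsAcyclic (D : Digraph') : Prop :=
  ∀ v, ¬ Relation.TransGen D.Adj v v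

/-- `φ` is an acyclic `k`-coloring of `D`: it uses colors `< k` on the vertices and
every color class induces an acyclic subdigraph. -/
def IsAcyclicColoring (D : Digraph') (k : ℕ) (φ : ℕ → ℕ) : Prop :=
  (∀ v ∈ D.verts, φ v < k) ∧ ∀ c, D.AcyclicOn {v | v ∈ D.verts ∧ φ v = c}

/-- `D` admits an acyclic `k`-coloring. -/
def Colorable (D : Digraph') (k : ℕ) : Prop := ∃ φ, D.IsAcyclicColoring k φ

/-- The dichromatic number of `D`. -/
noncomputable def dichrom (D : Digraph') : ℕ := sInf {k | D.Colorable k}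

/-- `H` is a subdigraph of `D`. -/
def IsSubdigraph (H D : Digraph') : Prop :=
  H.verts ⊆ D.verts ∧ ∀ ⦃u v⦄, H.Adj u v → D.Adj u v

/-- `D` is critical: every proper subdigraph has a strictly smaller dichromatic number. -/
def Critical (D : Digraph') : Prop :=
  ∀ H, IsSubdigraph H D → H ≠ D → dichrom H < dichrom D

/-- `D` is `k`-critical. -/
def IsCritical (D : Digraph') (k : ℕ) : Prop := D.dichrom = k ∧ D.Critical

/-- The digraph obtained from `D` by deleting the vertex `x`. -/
def delVert (D : Digraph') (x : ℕ) : Digraph' where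
  verts := D.verts.erase x
  Adj u v := D.Adj u v ∧ u ≠ x ∧ v ≠ x
  adj_mem := by
    intro u v h
    rcases h with ⟨h, hu, hv⟩
    exact ⟨Finset.mem_erase.2 ⟨hu, (D.adj_mem h).1⟩, Finset.mem_erase.2 ⟨hv, (D.adj_mem h).2⟩⟩
  loopless := by intro v h; exact D.loopless v h.1

/-- The digraph obtained from `D` by deleting the arc `xy`. -/
def delArc (D : Digraph') (x y : ℕ) : Digraph' where
  verts := D.verts
  Adj u v := D.Adj u v ∧ ¬(u = x ∧ v = y)
  adj_mem := by intro u v h; exact D.adj_mem h.1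
  loopless := by intro v h; exact D.loopless v h.1

/-- The out-degree of `v` in `D`. -/
noncomputable def outDeg (D : Digraph') (v : ℕ) : ℕ := Nat.card {w // D.Adj v w}

/-- The in-degree of `v` in `D`. -/
noncomputable def inDeg (D : Digraph') (v : ℕ) : ℕ := Nat.card {w // D.Adj w v}

/-- `D` is the complete biorientation of a complete graph on its vertex set. -/
def IsBiorientedComplete (D : Digraph') : Prop :=
  ∀ u v, D.Adj u v ↔ (u ∈ D.verts ∧ v ∈ D.verts ∧ u ≠ v)

/-- `D` is a directed cycle (of length at least `2`; length `2` is a digon):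
every vertex has out-degree and in-degree one and `D` is strongly connected. -/
def IsDirectedCycle (D : Digraph') : Prop :=
  2 ≤ D.verts.card ∧
  (∀ v ∈ D.verts, D.outDeg v = 1 ∧ D.inDeg v = 1) ∧
  ∀ u ∈ D.verts, ∀ v ∈ D.verts, Relation.TransGen D.Adj u v

/-- `D` is the Dirac join of the disjoint digraphs `D₁` and `D₂`: the union of `D₁`
and `D₂` together with all arcs in both directions between them. -/
def IsDiracJoin (D D₁ D₂ : Digraph') : Prop :=
  Disjoint D₁.verts D₂.verts ∧
  D.verts = D₁.verts ∪ D₂.verts ∧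
  ∀ u v, D.Adj u v ↔ (D₁.Adj u v ∨ D₂.Adj u v ∨
    (u ∈ D₁.verts ∧ v ∈ D₂.verts) ∨ (u ∈ D₂.verts ∧ v ∈ D₁.verts))

/-- `v` is a dominating vertex of `D`: it is joined by arcs in both directions to
all other vertices of `D`. -/
def IsDominatingVertex (D : Digraph') (v : ℕ) : Prop :=
  v ∈ D.verts ∧ ∀ u ∈ D.verts, u ≠ v → D.Adj u v ∧ D.Adj v u

/-- The number of dominating vertices of `D`. -/
noncomputable def numDomVerts (D : Digraph') : ℕ :=
  {v | D.IsDominatingVertex v}.ncard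

/-- `C` is a dominating subdigraph of `D`. -/
def IsDominatingSubdigraph (D C : Digraph') : Prop :=
  ∃ D'' : Digraph', D''.verts.Nonempty ∧ IsDiracJoin D C D''

/-- The number of dominating directed cycles of order at least three of `D`. -/
noncomputable def numDomCycles (D : Digraph') : ℕ :=
  {C : Digraph' | IsSubdigraph C D ∧ C.IsDirectedCycle ∧ 3 ≤ C.order ∧
    D.IsDominatingSubdigraph C}.ncard

/-- The complement of `D` (on the same vertex set). -/
def compl (D : Digraph') : Digraph' where
  verts := D.verts
  Adj u v := u ∈ D.verts ∧ v ∈ D.verts ∧ u ≠ v ∧ ¬ D.Adj u v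
  adj_mem := by intro u v h; exact ⟨h.1, h.2.1⟩
  loopless := by intro v h; exact h.2.2.1 rfl

/-- `D` is connected (its underlying undirected graph is connected). -/
def Connected (D : Digraph') : Prop :=
  D.verts.Nonempty ∧ ∀ u ∈ D.verts, ∀ v ∈ D.verts,
    Relation.ReflTransGen (fun a b => D.Adj a b ∨ D.Adj b a) u v

/-- `φ` is a proper `k`-coloring of the symmetric digraph `D` viewed as a graph. -/
def IsProperColoring (D : Digraph') (k : ℕ) (φ : ℕ → ℕ) : Prop :=
  (∀ v ∈ D.verts, φ v < k) ∧ ∀ u v, D.Adj u v → φ u ≠ φ v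

/-- The chromatic number of (the underlying graph of) `D`. -/
noncomputable def chrom (D : Digraph') : ℕ := sInf {k | ∃ φ, D.IsProperColoring k φ}

/-- `D` belongs to the (complete biorientation of the) Gallai--Dirac class `DG(k)`. -/
def InDGClass (D : Digraph') (k : ℕ) : Prop :=
  ∃ (X Y₁ Y₂ : Finset ℕ) (v₁ v₂ : ℕ),
    X.Nonempty ∧ Y₁.Nonempty ∧ Y₂.Nonempty ∧
    Disjoint X Y₁ ∧ Disjoint X Y₂ ∧ Disjoint Y₁ Y₂ ∧
    v₁ ∉ X ∪ Y₁ ∪ Y₂ ∧ v₂ ∉ X ∪ Y₁ ∪ Y₂ ∧ v₁ ≠ v₂ ∧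
    Y₁.card + Y₂.card = k - 1 ∧ X.card + 1 = k - 1 ∧
    D.verts = X ∪ Y₁ ∪ Y₂ ∪ {v₁, v₂} ∧
    (∀ u v, D.Adj u v ↔ (u ≠ v ∧
      ((u ∈ X ∧ v ∈ X) ∨ (u ∈ Y₁ ∪ Y₂ ∧ v ∈ Y₁ ∪ Y₂) ∨
       (u = v₁ ∧ v ∈ X ∪ Y₁) ∨ (v = v₁ ∧ u ∈ X ∪ Y₁) ∨
       (u = v₂ ∧ v ∈ X ∪ Y₂) ∨ (v = v₂ ∧ u ∈ X ∪ Y₂))))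

end Digraph'

/-- The minimum number of arcs in a `k`-critical digraph of order `n`. -/
noncomputable def extArcs (k n : ℕ) : ℕ :=
  sInf {m | ∃ D : Digraph', D.IsCritical k ∧ D.order = n ∧ D.numArcs = m}

open Digraph'

/-!
Let `D` have `k + 1` vertices. By pigeonhole, `D` has an acyclic `k`-coloring iff some pair of
vertices is not a digon, and an acyclic `(k - 1)`-coloring iff some three vertices induce an
acyclic subdigraph or two disjoint pairs are both non-digons. If `D` is `k`-critical, the
non-digon pairs therefore pairwise meet, while every `D - v`, being `(k - 1)`-colorable, contains
a non-digon pair avoiding `v`. Such a family of pairs is a triangle `{x, y, z}`; as this triangle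
is not acyclic it is a directed 3-cycle, and all other pairs are digons. Conversely, in that
digraph deleting a vertex leaves a non-digon pair, and deleting an arc either breaks the 3-cycle
or creates a second non-digon pair disjoint from one in the triangle, so every proper
subdigraph is `(k - 1)`-colorable.
-/

theorem exists_triangle_of_pairwise_meet {α : Type*} {r : α → α → Prop}
    (hsymm : ∀ a b, r a b → r b a) (hirr : ∀ a, ¬ r a a)
    (hmeet : ∀ a b c d, r a b → r c d → a = c ∨ a = d ∨ b = c ∨ b = d)
    (hne : ∃ a b, r a b) (havoid : ∀ a b, r a b → ∃ c d, r c d ∧ c ≠ a ∧ d ≠ a) :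
    ∃ x y z, r x y ∧ r y z ∧ r x z ∧
      ∀ u v, r u v → (u = x ∨ u = y ∨ u = z) ∧ (v = x ∨ v = y ∨ v = z) := by
  have hne' : ∀ {a b}, r a b → a ≠ b := fun h e => hirr _ (e ▸ h)
  have through : ∀ a b, r a b → ∃ c, r b c ∧ c ≠ a := by
    intro a b hab
    obtain ⟨c, d, hcd, hca, hda⟩ := havoid a b hab
    rcases hmeet a b c d hab hcd with rfl | rfl | rfl | rfl
    exacts [absurd rfl hca, absurd rfl hda, ⟨d, hcd, hda⟩, ⟨c, hsymm _ _ hcd, hca⟩]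
  obtain ⟨a, b, hab⟩ := hne
  obtain ⟨c, hbc, hca⟩ := through a b hab
  obtain ⟨d, had, hdb⟩ := through b a (hsymm _ _ hab)
  obtain rfl : d = c := by
    rcases hmeet a d b c had hbc with h | h | h | h
    exacts [absurd h (hne' hab), absurd h hca.symm, absurd h hdb, h]
  refine ⟨a, b, d, hab, hbc, had, fun u v huv => ?_⟩
  have := hmeet u v a b huv hab
  have := hmeet u v b d huv hbc
  have := hmeet u v a d huv had
  have := hne' hab
  have := hne' hbc
  have := hne' had
  grind

namespace Digraph'

variable {C D E H : Digraph'} {S T : Set ℕ} {k m x y z : ℕ}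

theorem ext_of_verts_eq_of_adj_iff (hV : H.verts = D.verts)
    (hA : ∀ u v, H.Adj u v ↔ D.Adj u v) : H = D := by
  obtain ⟨V, A, _, _⟩ := H
  obtain ⟨V', A', _, _⟩ := D
  obtain rfl : V = V' := hV
  obtain rfl : A = A' := funext₂ fun u v => propext (hA u v)
  rfl

theorem AcyclicOn.mono (hST : S ⊆ T) (hT : D.AcyclicOn T) : D.AcyclicOn S := fun v hv =>
  hT v (Relation.TransGen.mono (fun _ _ ⟨ha, hb, hab⟩ => ⟨hST ha, hST hb, hab⟩) _ _ hv)

theorem AcyclicOn.of_adj_imp (h : ∀ a ∈ S, ∀ b ∈ S, D.Adj a b → E.Adj a b)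
    (hE : E.AcyclicOn S) : D.AcyclicOn S := fun v hv =>
  hE v (Relation.TransGen.mono (fun a b ⟨ha, hb, hab⟩ => ⟨ha, hb, h a ha b hb hab⟩) _ _ hv)

theorem acyclicOn_of_subsingleton (hS : S.Subsingleton) : D.AcyclicOn S := by
  intro v hv
  obtain ⟨w, ⟨hv, hw, hvw⟩, -⟩ := Relation.TransGen.head'_iff.1 hv
  exact D.loopless v (hS hv hw ▸ hvw)

theorem AcyclicOn.insert_of_forall_not_adj {v : ℕ} (hS : D.AcyclicOn S)
    (hv : ∀ w ∈ S, ¬ D.Adj v w) : D.AcyclicOn (insert v S) := by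
  have hsink : ∀ a b, a ∈ insert v S → b ∈ insert v S → D.Adj a b → a ∈ S := by
    rintro a b (rfl | ha) hb hab
    · rcases hb with rfl | hb
      exacts [(D.loopless _ hab).elim, (hv _ hb hab).elim]
    · exact ha
  have hpath : ∀ a b, Relation.TransGen (fun a b => a ∈ insert v S ∧ b ∈ insert v S ∧ D.Adj a b)
      a b → b ∈ S → Relation.TransGen (fun a b => a ∈ S ∧ b ∈ S ∧ D.Adj a b) a b := by
    intro a b hab hb
    induction hab with
    | single h => exact .single ⟨hsink _ _ h.1 h.2.1 h.2.2, hb, h.2.2⟩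
    | tail _ h ih =>
      have hc := hsink _ _ h.1 h.2.1 h.2.2
      exact .tail (ih hc) ⟨hc, hb, h.2.2⟩
  intro w hw
  obtain ⟨u, hwu, -⟩ := Relation.TransGen.head'_iff.1 hw
  exact hS w (hpath w w hw (hsink _ _ hwu.1 hwu.2.1 hwu.2.2))

theorem not_acyclicOn_of_adj_of_adj {u v : ℕ} (hu : u ∈ S) (hv : v ∈ S) (huv : D.Adj u v)
    (hvu : D.Adj v u) : ¬ D.AcyclicOn S := fun hS =>
  hS u (.head ⟨hu, hv, huv⟩ (.single ⟨hv, hu, hvu⟩))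

theorem acyclicOn_pair_iff {u v : ℕ} : D.AcyclicOn {u, v} ↔ ¬ (D.Adj u v ∧ D.Adj v u) := by
  refine ⟨fun h ⟨huv, hvu⟩ => not_acyclicOn_of_adj_of_adj (by simp) (by simp) huv hvu h, ?_⟩
  intro h
  by_cases huv : D.Adj u v
  · rw [Set.pair_comm]
    refine (acyclicOn_of_subsingleton (Set.subsingleton_singleton)).insert_of_forall_not_adj ?_
    rintro w rfl
    exact fun hvu => h ⟨huv, hvu⟩
  · refine (acyclicOn_of_subsingleton (Set.subsingleton_singleton)).insert_of_forall_not_adj ?_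
    rintro w rfl
    exact huv

theorem not_acyclicOn_of_adj_cycle (hxy : D.Adj x y) (hyz : D.Adj y z)
    (hzx : D.Adj z x) : ¬ D.AcyclicOn {x, y, z} := fun h =>
  h x (.head ⟨by simp, by simp, hxy⟩
    (.head ⟨by simp, by simp, hyz⟩ (.single ⟨by simp, by simp, hzx⟩)))

theorem adj_cycle_of_not_acyclicOn (hxy : D.AcyclicOn {x, y})
    (hyz : D.AcyclicOn {y, z}) (hxz : D.AcyclicOn {x, z}) (h : ¬ D.AcyclicOn {x, y, z}) :
    (D.Adj x y ∧ D.Adj y z ∧ D.Adj z x) ∨ (D.Adj y x ∧ D.Adj z y ∧ D.Adj x z) := by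
  rw [acyclicOn_pair_iff] at hxy hyz hxz
  have out : ∀ a b c, ({a, b, c} : Set ℕ) = {x, y, z} → ¬ (D.Adj b c ∧ D.Adj c b) →
      D.Adj a b ∨ D.Adj a c := by
    intro a b c habc hbc
    by_contra hno
    push Not at hno
    refine h (habc ▸ (acyclicOn_pair_iff.2 hbc).insert_of_forall_not_adj ?_)
    rintro w (rfl | rfl)
    exacts [hno.1, hno.2]
  have hx := out x y z rfl hyz
  have hy := out y x z (Set.insert_comm _ _ _) hxz
  have hz := out z x y (by rw [Set.insert_comm, Set.pair_comm, Set.insert_comm]) hxy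
  tauto

theorem Colorable.mono {m' : ℕ} (h : D.Colorable m) (hm : m ≤ m') : D.Colorable m' := by
  obtain ⟨φ, hφ, hcl⟩ := h
  exact ⟨φ, fun v hv => (hφ v hv).trans_le hm, hcl⟩

theorem Colorable.of_isSubdigraph (h : D.Colorable m) (hHD : IsSubdigraph H D) :
    H.Colorable m := by
  obtain ⟨φ, hφ, hcl⟩ := h
  refine ⟨φ, fun v hv => hφ v (hHD.1 hv), fun c => ?_⟩
  have hsub : {v | v ∈ H.verts ∧ φ v = c} ⊆ {v | v ∈ D.verts ∧ φ v = c} :=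
    fun v hv => ⟨hHD.1 hv.1, hv.2⟩
  exact ((hcl c).mono hsub).of_adj_imp fun _ _ _ _ hab => hHD.2 hab

theorem colorable_of_mapsTo {f : ℕ → ℕ} {T : Finset ℕ} (hf : ∀ v ∈ D.verts, f v ∈ T)
    (hfib : ∀ c, D.AcyclicOn {v | v ∈ D.verts ∧ f v = c}) : D.Colorable T.card := by
  classical
  let φ v := if h : f v ∈ T then (T.equivFin ⟨f v, h⟩ : ℕ) else 0
  have hφ : ∀ v ∈ D.verts, ∀ w ∈ D.verts, φ v = φ w → f v = f w := by
    intro v hv w hw hvw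
    simp only [φ, dif_pos (hf v hv), dif_pos (hf w hw)] at hvw
    exact congrArg Subtype.val (T.equivFin.injective (Fin.ext hvw))
  refine ⟨φ, fun v hv => by simp [φ, hf v hv], fun c v hv => ?_⟩
  obtain ⟨w, ⟨hv', -, -⟩, -⟩ := Relation.TransGen.head'_iff.1 hv
  refine (hfib (f v)).mono ?_ v hv
  rintro w ⟨hw, rfl⟩
  exact ⟨hw, hφ w hw v hv'.1 hv'.2.symm⟩

theorem colorable_card (D : Digraph') : D.Colorable D.verts.card :=
  colorable_of_mapsTo (f := id) (fun _ hv => hv) fun _ =>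
    acyclicOn_of_subsingleton (Set.subsingleton_singleton.anti fun _ hv => hv.2)

theorem dichrom_le (h : D.Colorable m) : D.dichrom ≤ m := Nat.sInf_le h

theorem colorable_dichrom (D : Digraph') : D.Colorable D.dichrom :=
  Nat.sInf_mem (s := {m | D.Colorable m}) ⟨_, D.colorable_card⟩

theorem colorable_iff_dichrom_le : D.Colorable m ↔ D.dichrom ≤ m :=
  ⟨dichrom_le, D.colorable_dichrom.mono⟩

theorem colorable_of_acyclicOn_finset {B : Finset ℕ} {b : ℕ} (hB : B ⊆ D.verts) (hb : b ∈ B)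
    (hA : D.AcyclicOn B) : D.Colorable (D.verts.card - B.card + 1) := by
  classical
  have hT : (insert b (D.verts \ B)).card = D.verts.card - B.card + 1 := by
    rw [Finset.card_insert_of_notMem (by simp [hb]), Finset.card_sdiff_of_subset hB]
  rw [← hT]
  refine colorable_of_mapsTo (f := fun v => if v ∈ B then b else v) (fun v hv => ?_) fun c => ?_
  · by_cases hvB : v ∈ B <;> simp [hvB, hv]
  have hfib : ∀ v, (if v ∈ B then b else v) = c → (v ∈ B ∧ c = b) ∨ (v ∉ B ∧ v = c) := by
    intro v hv
    split_ifs at hv <;> tauto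
  by_cases hc : c = b
  · refine hA.mono fun v hv => ?_
    rcases hfib v hv.2 with h | h
    exacts [h.1, absurd (h.2 ▸ hc ▸ hb) h.1]
  refine acyclicOn_of_subsingleton ((Set.subsingleton_singleton (a := c)).anti fun v hv => ?_)
  rcases hfib v hv.2 with h | h
  exacts [absurd h.2 hc, h.2]

theorem colorable_of_disjoint_acyclicOn_finsets {B₁ B₂ : Finset ℕ} {b₁ b₂ : ℕ}
    (hB₁ : B₁ ⊆ D.verts) (hB₂ : B₂ ⊆ D.verts) (hB : Disjoint B₁ B₂) (hb₁ : b₁ ∈ B₁)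
    (hb₂ : b₂ ∈ B₂) (hA₁ : D.AcyclicOn B₁) (hA₂ : D.AcyclicOn B₂) :
    D.Colorable (D.verts.card - B₁.card - B₂.card + 2) := by
  classical
  have hb : b₁ ≠ b₂ := fun h => Finset.disjoint_left.1 hB hb₁ (h ▸ hb₂)
  have hT : (insert b₁ (insert b₂ (D.verts \ (B₁ ∪ B₂)))).card =
      D.verts.card - B₁.card - B₂.card + 2 := by
    rw [Finset.card_insert_of_notMem (by simp [hb, hb₁]),
      Finset.card_insert_of_notMem (by simp [hb₂]),
      Finset.card_sdiff_of_subset (Finset.union_subset hB₁ hB₂), Finset.card_union_of_disjoint hB]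
    omega
  rw [← hT]
  refine colorable_of_mapsTo (f := fun v => if v ∈ B₁ then b₁ else if v ∈ B₂ then b₂ else v)
    (fun v hv => ?_) fun c => ?_
  · by_cases hv₁ : v ∈ B₁ <;> by_cases hv₂ : v ∈ B₂ <;> simp [hv₁, hv₂, hv]
  have hfib : ∀ v, (if v ∈ B₁ then b₁ else if v ∈ B₂ then b₂ else v) = c →
      (v ∈ B₁ ∧ c = b₁) ∨ (v ∈ B₂ ∧ c = b₂) ∨ (v ∉ B₁ ∧ v ∉ B₂ ∧ v = c) := by
    intro v hv
    split_ifs at hv <;> tauto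
  by_cases hc₁ : c = b₁
  · refine hA₁.mono fun v hv => ?_
    rcases hfib v hv.2 with h | h | h
    · exact h.1
    · exact absurd (h.2 ▸ hc₁) hb.symm
    · exact absurd (h.2.2 ▸ hc₁ ▸ hb₁) h.1
  by_cases hc₂ : c = b₂
  · refine hA₂.mono fun v hv => ?_
    rcases hfib v hv.2 with h | h | h
    · exact absurd h.2 hc₁
    · exact h.1
    · exact absurd (h.2.2 ▸ hc₂ ▸ hb₂) h.2.1
  refine acyclicOn_of_subsingleton ((Set.subsingleton_singleton (a := c)).anti fun v hv => ?_)
  rcases hfib v hv.2 with h | h | h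
  exacts [absurd h.2 hc₁, absurd h.2 hc₂, h.2.2]

theorem IsAcyclicColoring.acyclicOn {φ : ℕ → ℕ} (hφ : D.IsAcyclicColoring m φ) {c : ℕ}
    (hS : ∀ v ∈ S, v ∈ D.verts ∧ φ v = c) : D.AcyclicOn S :=
  (hφ.2 c).mono hS

theorem colorable_card_sub_one_iff (hV : D.verts.Nonempty) :
    D.Colorable (D.verts.card - 1) ↔
      ∃ u ∈ D.verts, ∃ v ∈ D.verts, u ≠ v ∧ D.AcyclicOn {u, v} := by
  constructor
  · rintro ⟨φ, hφ⟩
    obtain ⟨u, hu, v, hv, huv, he⟩ := Finset.exists_ne_map_eq_of_card_lt_of_maps_to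
      (t := Finset.range (D.verts.card - 1)) (by simpa using hV.card_pos)
      fun w hw => Finset.mem_range.2 (hφ.1 w hw)
    refine ⟨u, hu, v, hv, huv, hφ.acyclicOn (c := φ u) ?_⟩
    rintro w (rfl | rfl)
    exacts [⟨hu, rfl⟩, ⟨hv, he.symm⟩]
  · rintro ⟨u, hu, v, hv, huv, h⟩
    have hB : {u, v} ⊆ D.verts := by simp [Finset.insert_subset_iff, hu, hv]
    have hn := Finset.card_le_card hB
    rw [Finset.card_pair huv] at hn
    have := colorable_of_acyclicOn_finset hB (Finset.mem_insert_self u {v})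
      (by rwa [Finset.coe_pair])
    rwa [Finset.card_pair huv, show D.verts.card - 2 + 1 = D.verts.card - 1 by omega] at this

theorem colorable_card_sub_two_of_acyclicOn_triple {a b c : ℕ} (ha : a ∈ D.verts)
    (hb : b ∈ D.verts) (hc : c ∈ D.verts) (hab : a ≠ b) (hac : a ≠ c) (hbc : b ≠ c)
    (h : D.AcyclicOn {a, b, c}) : D.Colorable (D.verts.card - 2) := by
  have hB : {a, b, c} ⊆ D.verts := by simp [Finset.insert_subset_iff, ha, hb, hc]
  have hcard : ({a, b, c} : Finset ℕ).card = 3 :=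
    Finset.card_eq_three.2 ⟨a, b, c, hab, hac, hbc, rfl⟩
  have hn := Finset.card_le_card hB
  have := colorable_of_acyclicOn_finset hB (Finset.mem_insert_self a {b, c})
    (by rwa [Finset.coe_insert, Finset.coe_pair])
  rw [hcard] at hn this
  exact this.mono (by omega)

theorem colorable_card_sub_two_of_acyclicOn_pairs {a b c d : ℕ} (ha : a ∈ D.verts)
    (hb : b ∈ D.verts) (hc : c ∈ D.verts) (hd : d ∈ D.verts) (hab : a ≠ b) (hcd : c ≠ d)
    (hac : a ≠ c) (had : a ≠ d) (hbc : b ≠ c) (hbd : b ≠ d) (h₁ : D.AcyclicOn {a, b})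
    (h₂ : D.AcyclicOn {c, d}) : D.Colorable (D.verts.card - 2) := by
  have hB₁ : {a, b} ⊆ D.verts := by simp [Finset.insert_subset_iff, ha, hb]
  have hB₂ : {c, d} ⊆ D.verts := by simp [Finset.insert_subset_iff, hc, hd]
  have hdisj : Disjoint ({a, b} : Finset ℕ) {c, d} := by simp; omega
  have hn := Finset.card_le_card (Finset.union_subset hB₁ hB₂)
  rw [Finset.card_union_of_disjoint hdisj, Finset.card_pair hab, Finset.card_pair hcd] at hn
  have := colorable_of_disjoint_acyclicOn_finsets hB₁ hB₂ hdisj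
    (Finset.mem_insert_self a {b}) (Finset.mem_insert_self c {d})
    (by rwa [Finset.coe_pair]) (by rwa [Finset.coe_pair])
  rw [Finset.card_pair hab, Finset.card_pair hcd] at this
  exact this.mono (by omega)

theorem Colorable.exists_acyclicOn_triple_or_pairs (h : D.Colorable (D.verts.card - 2))
    (hV : 2 ≤ D.verts.card) :
    (∃ a ∈ D.verts, ∃ b ∈ D.verts, ∃ c ∈ D.verts,
      a ≠ b ∧ a ≠ c ∧ b ≠ c ∧ D.AcyclicOn {a, b, c}) ∨
    (∃ a ∈ D.verts, ∃ b ∈ D.verts, ∃ c ∈ D.verts, ∃ d ∈ D.verts,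
      a ≠ b ∧ c ≠ d ∧ a ≠ c ∧ a ≠ d ∧ b ≠ c ∧ b ≠ d ∧
      D.AcyclicOn {a, b} ∧ D.AcyclicOn {c, d}) := by
  obtain ⟨φ, hφ⟩ := h
  have hrange : ∀ s ⊆ D.verts, Set.MapsTo φ s (Finset.range (D.verts.card - 2)) :=
    fun s hs w hw => Finset.mem_range.2 (hφ.1 w (hs hw))
  obtain ⟨u, hu, v, hv, huv, he⟩ := Finset.exists_ne_map_eq_of_card_lt_of_maps_to
    (s := D.verts) (by simp only [Finset.card_range]; omega) (hrange _ subset_rfl)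
  obtain ⟨u', hu', v', hv', huv', he'⟩ := Finset.exists_ne_map_eq_of_card_lt_of_maps_to
    (by simp [Finset.card_erase_of_mem hu]; omega) (hrange _ (D.verts.erase_subset u))
  rw [Finset.mem_erase] at hu' hv'
  obtain rfl | h₁ := eq_or_ne v u'
  · refine Or.inl ⟨u, hu, v, hv, v', hv'.2, huv, Ne.symm hv'.1, huv',
      hφ.acyclicOn (c := φ u) ?_⟩
    rintro w (rfl | rfl | rfl)
    exacts [⟨hu, rfl⟩, ⟨hv, he.symm⟩, ⟨hv'.2, he'.symm.trans he.symm⟩]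
  obtain rfl | h₂ := eq_or_ne v v'
  · refine Or.inl ⟨u, hu, v, hv, u', hu'.2, huv, Ne.symm hu'.1, h₁,
      hφ.acyclicOn (c := φ u) ?_⟩
    rintro w (rfl | rfl | rfl)
    exacts [⟨hu, rfl⟩, ⟨hv, he.symm⟩, ⟨hu'.2, he'.trans he.symm⟩]
  refine Or.inr ⟨u, hu, v, hv, u', hu'.2, v', hv'.2, huv, huv', Ne.symm hu'.1, Ne.symm hv'.1,
    h₁, h₂, hφ.acyclicOn (c := φ u) ?_, hφ.acyclicOn (c := φ u') ?_⟩
  · rintro w (rfl | rfl)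
    exacts [⟨hu, rfl⟩, ⟨hv, he.symm⟩]
  · rintro w (rfl | rfl)
    exacts [⟨hu'.2, rfl⟩, ⟨hv'.2, he'.symm⟩]

theorem colorable_card_sub_two_iff (hV : 2 ≤ D.verts.card) :
    D.Colorable (D.verts.card - 2) ↔
      (∃ a ∈ D.verts, ∃ b ∈ D.verts, ∃ c ∈ D.verts,
        a ≠ b ∧ a ≠ c ∧ b ≠ c ∧ D.AcyclicOn {a, b, c}) ∨
      (∃ a ∈ D.verts, ∃ b ∈ D.verts, ∃ c ∈ D.verts, ∃ d ∈ D.verts,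
        a ≠ b ∧ c ≠ d ∧ a ≠ c ∧ a ≠ d ∧ b ≠ c ∧ b ≠ d ∧
        D.AcyclicOn {a, b} ∧ D.AcyclicOn {c, d}) := by
  refine ⟨fun h => h.exists_acyclicOn_triple_or_pairs hV, ?_⟩
  rintro (⟨a, ha, b, hb, c, hc, hab, hac, hbc, h⟩ |
    ⟨a, ha, b, hb, c, hc, d, hd, hab, hcd, hac, had, hbc, hbd, h₁, h₂⟩)
  exacts [colorable_card_sub_two_of_acyclicOn_triple ha hb hc hab hac hbc h,
    colorable_card_sub_two_of_acyclicOn_pairs ha hb hc hd hab hcd hac had hbc hbd h₁ h₂]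

theorem isSubdigraph_delVert (D : Digraph') (v : ℕ) : IsSubdigraph (D.delVert v) D :=
  ⟨Finset.erase_subset _ _, fun _ _ h => h.1⟩

theorem delVert_ne {v : ℕ} (hv : v ∈ D.verts) : D.delVert v ≠ D := fun h =>
  (Finset.mem_erase.1 ((congrArg verts h).symm ▸ hv)).1 rfl

theorem IsSubdigraph.exists_delVert_or_delArc (hHD : IsSubdigraph H D) (hne : H ≠ D) :
    (∃ v ∈ D.verts, IsSubdigraph H (D.delVert v)) ∨
      ∃ p q, D.Adj p q ∧ IsSubdigraph H (D.delArc p q) := by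
  by_cases hV : H.verts = D.verts
  · obtain ⟨p, q, hpq, hH⟩ : ∃ p q, D.Adj p q ∧ ¬ H.Adj p q := by
      by_contra! h
      exact hne (ext_of_verts_eq_of_adj_iff hV fun u v => ⟨fun h' => hHD.2 h', h u v⟩)
    refine Or.inr ⟨p, q, hpq, hHD.1, fun u v huv => ⟨hHD.2 huv, ?_⟩⟩
    rintro ⟨rfl, rfl⟩
    exact hH huv
  · obtain ⟨v, hv, hvH⟩ := Finset.exists_of_ssubset (hHD.1.ssubset_of_ne hV)
    refine Or.inl ⟨v, hv, fun w hw => Finset.mem_erase.2 ⟨?_, hHD.1 hw⟩, fun u w huw => ?_⟩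
    · rintro rfl
      exact hvH hw
    · refine ⟨hHD.2 huw, ?_, ?_⟩ <;> rintro rfl
      exacts [hvH (H.adj_mem huw).1, hvH (H.adj_mem huw).2]

theorem Critical.colorable_delVert (h : D.Critical) {v : ℕ} (hv : v ∈ D.verts) :
    (D.delVert v).Colorable (D.dichrom - 1) := by
  have := h _ (D.isSubdigraph_delVert v) (delVert_ne hv)
  exact colorable_iff_dichrom_le.2 (by omega)

theorem critical_of_forall_colorable (hpos : 0 < D.dichrom)
    (hvert : ∀ v ∈ D.verts, (D.delVert v).Colorable (D.dichrom - 1))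
    (harc : ∀ p q, D.Adj p q → (D.delArc p q).Colorable (D.dichrom - 1)) : D.Critical := by
  intro H hHD hne
  suffices H.Colorable (D.dichrom - 1) by have := dichrom_le this; omega
  rcases hHD.exists_delVert_or_delArc hne with ⟨v, hv, hH⟩ | ⟨p, q, hpq, hH⟩
  exacts [(hvert v hv).of_isSubdigraph hH, (harc p q hpq).of_isSubdigraph hH]

theorem natCard_eq_one_of_forall_iff {P : ℕ → Prop} {a : ℕ} (h : ∀ w, P w ↔ w = a) :
    Nat.card {w // P w} = 1 := by
  simp [h]

theorem isDirectedCycle_of_adj_iff (hxy : x ≠ y) (hxz : x ≠ z) (hyz : y ≠ z)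
    (hV : C.verts = {x, y, z})
    (hA : ∀ u v, C.Adj u v ↔ u = x ∧ v = y ∨ u = y ∧ v = z ∨ u = z ∧ v = x) :
    C.IsDirectedCycle := by
  have hmem : ∀ v ∈ C.verts, v = x ∨ v = y ∨ v = z := by simp [hV]
  have hx : C.Adj x y := by simp [hA]
  have hy : C.Adj y z := by simp [hA]
  have hz : C.Adj z x := by simp [hA]
  refine ⟨by rw [hV, Finset.card_eq_three.2 ⟨x, y, z, hxy, hxz, hyz, rfl⟩]; omega,
    fun v hv => ?_, fun u hu v hv => ?_⟩
  · have hdeg : ∀ a b c, (∀ w, C.Adj a w ↔ w = b) → (∀ w, C.Adj w a ↔ w = c) →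
        C.outDeg a = 1 ∧ C.inDeg a = 1 := fun a b c hb hc =>
      ⟨natCard_eq_one_of_forall_iff hb, natCard_eq_one_of_forall_iff hc⟩
    rcases hmem v hv with rfl | rfl | rfl
    · exact hdeg v y z (fun w => by rw [hA]; grind) (fun w => by rw [hA]; grind)
    · exact hdeg v z x (fun w => by rw [hA]; grind) (fun w => by rw [hA]; grind)
    · exact hdeg v x y (fun w => by rw [hA]; grind) (fun w => by rw [hA]; grind)
  · have to_x : Relation.TransGen C.Adj u x := by
      rcases hmem u hu with rfl | rfl | rfl
      exacts [.head hx (.head hy (.single hz)), .head hy (.single hz), .single hz]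
    have from_x : Relation.ReflTransGen C.Adj x v := by
      rcases hmem v hv with rfl | rfl | rfl
      exacts [.refl, .single hx, .head hx (.single hy)]
    exact to_x.trans_left from_x

theorem IsDirectedCycle.adj_unique_right (hC : C.IsDirectedCycle) {v w w' : ℕ} (hw : C.Adj v w)
    (hw' : C.Adj v w') : w = w' := by
  have := (Nat.card_eq_one_iff_unique.1 (hC.2.1 v (C.adj_mem hw).1).1).1
  exact congrArg Subtype.val (Subsingleton.elim (α := {w // C.Adj v w}) ⟨w, hw⟩ ⟨w', hw'⟩)

theorem IsDirectedCycle.adj_unique_left (hC : C.IsDirectedCycle) {v w w' : ℕ} (hw : C.Adj w v)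
    (hw' : C.Adj w' v) : w = w' := by
  have := (Nat.card_eq_one_iff_unique.1 (hC.2.1 v (C.adj_mem hw).2).2).1
  exact congrArg Subtype.val (Subsingleton.elim (α := {w // C.Adj w v}) ⟨w, hw⟩ ⟨w', hw'⟩)

theorem IsDirectedCycle.exists_adj (hC : C.IsDirectedCycle) {v : ℕ} (hv : v ∈ C.verts) :
    ∃ w, C.Adj v w := by
  obtain ⟨⟨w, hw⟩⟩ := (Nat.card_eq_one_iff_unique.1 (hC.2.1 v hv).1).2
  exact ⟨w, hw⟩

theorem IsDirectedCycle.adj_triangle (hC : C.IsDirectedCycle) (hxy : x ≠ y)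
    (hxz : x ≠ z) (hyz : y ≠ z) (hV : C.verts = {x, y, z}) (hxy' : C.Adj x y) :
    C.Adj y z ∧ C.Adj z x ∧ ¬ C.Adj y x ∧ ¬ C.Adj z y ∧ ¬ C.Adj x z := by
  have hmem : ∀ {u v}, C.Adj u v → v = x ∨ v = y ∨ v = z := fun h => by
    simpa [hV] using (C.adj_mem h).2
  obtain ⟨u, hzu⟩ := hC.exists_adj (v := z) (by simp [hV])
  have hzx : C.Adj z x := by
    rcases hmem hzu with rfl | rfl | rfl
    exacts [hzu, absurd (hC.adj_unique_left hxy' hzu) hxz, absurd hzu (C.loopless _)]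
  obtain ⟨w, hyw⟩ := hC.exists_adj (v := y) (by simp [hV])
  have hyz' : C.Adj y z := by
    rcases hmem hyw with rfl | rfl | rfl
    exacts [absurd (hC.adj_unique_left hyw hzx) hyz, absurd hyw (C.loopless _), hyw]
  exact ⟨hyz', hzx, fun h => hxz (hC.adj_unique_right h hyz'),
    fun h => hxy (hC.adj_unique_right hzx h), fun h => hyz (hC.adj_unique_right hxy' h)⟩

theorem IsDirectedCycle.exists_of_order_eq_three (hC : C.IsDirectedCycle) (h3 : C.order = 3) :
    ∃ x y z, C.verts = {x, y, z} ∧ C.Adj x y ∧ C.Adj y z ∧ C.Adj z x ∧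
      ¬ C.Adj y x ∧ ¬ C.Adj z y ∧ ¬ C.Adj x z := by
  obtain ⟨x, y, z, hxy, hxz, hyz, hV⟩ := Finset.card_eq_three.1 h3
  obtain ⟨w, hxw⟩ := hC.exists_adj (v := x) (by simp [hV])
  have hw : w = y ∨ w = z := by
    have := (C.adj_mem hxw).2
    simp only [hV, Finset.mem_insert, Finset.mem_singleton] at this
    rcases this with rfl | h
    exacts [absurd hxw (C.loopless _), h]
  rcases hw with rfl | rfl
  · exact ⟨x, w, z, hV, hxw, hC.adj_triangle hxy hxz hyz hV hxw⟩
  · have hV' : C.verts = {x, w, y} := by rw [hV, Finset.pair_comm]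
    exact ⟨x, w, y, hV', hxw, hC.adj_triangle hxz hxy hyz.symm hV' hxw⟩

def induce (D : Digraph') (S : Finset ℕ) : Digraph' where
  verts := D.verts ∩ S
  Adj u v := D.Adj u v ∧ u ∈ S ∧ v ∈ S
  adj_mem _ _ h := ⟨Finset.mem_inter.2 ⟨(D.adj_mem h.1).1, h.2.1⟩,
    Finset.mem_inter.2 ⟨(D.adj_mem h.1).2, h.2.2⟩⟩
  loopless v h := D.loopless v h.1

theorem isDiracJoin_induce_sdiff (S : Finset ℕ)
    (h : ∀ u ∈ D.verts, ∀ v ∈ D.verts, u ∉ S → v ∈ S → D.Adj u v ∧ D.Adj v u) :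
    IsDiracJoin D (D.induce (D.verts \ S)) (D.induce S) := by
  refine ⟨Finset.disjoint_left.2 fun u hu hu' => ?_, ?_, fun u v => ?_⟩
  · simp only [induce, Finset.mem_inter, Finset.mem_sdiff] at hu hu'
    exact hu.2.2 hu'.2
  · ext u
    simp only [induce, Finset.mem_union, Finset.mem_inter, Finset.mem_sdiff]
    tauto
  · simp only [induce, Finset.mem_inter, Finset.mem_sdiff]
    constructor
    · intro huv
      have := D.adj_mem huv
      tauto
    · rintro (h' | h' | ⟨⟨hu, -, hu'⟩, hv, hv'⟩ | ⟨⟨hu, hu'⟩, hv, -, hv'⟩)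
      exacts [h'.1, h'.1, (h u hu v hv hu' hv').1, (h v hv u hu hv' hu').2]

theorem IsDiracJoin.card_verts {D₁ D₂ : Digraph'} (h : IsDiracJoin D D₁ D₂) :
    D.verts.card = D₁.verts.card + D₂.verts.card := by
  rw [h.2.1, Finset.card_union_of_disjoint h.1]

theorem ne_of_adj {u v : ℕ} (h : D.Adj u v) : u ≠ v := by
  rintro rfl
  exact D.loopless u h

/-- Adjacency form of `D^±(K_{k-2}) ⊞ C⃗₃`, where `C⃗₃` is `x → y → z → x`. -/
structure IsCompleteExceptTriangle (D : Digraph') (x y z : ℕ) : Prop where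
  adj_xy : D.Adj x y
  adj_yz : D.Adj y z
  adj_zx : D.Adj z x
  not_adj_yx : ¬ D.Adj y x
  not_adj_zy : ¬ D.Adj z y
  not_adj_xz : ¬ D.Adj x z
  mem_of_not_adj : ∀ ⦃u v⦄, u ∈ D.verts → v ∈ D.verts → u ≠ v → ¬ D.Adj u v →
    u ∈ ({x, y, z} : Finset ℕ) ∧ v ∈ ({x, y, z} : Finset ℕ)

namespace IsCompleteExceptTriangle

theorem rotate (h : D.IsCompleteExceptTriangle x y z) : D.IsCompleteExceptTriangle y z x where
  adj_xy := h.adj_yz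
  adj_yz := h.adj_zx
  adj_zx := h.adj_xy
  not_adj_yx := h.not_adj_zy
  not_adj_zy := h.not_adj_xz
  not_adj_xz := h.not_adj_yx
  mem_of_not_adj u v hu hv huv huv' := by
    have := h.mem_of_not_adj hu hv huv huv'
    simp only [Finset.mem_insert, Finset.mem_singleton] at this ⊢
    tauto

theorem triangle_subset (h : D.IsCompleteExceptTriangle x y z) : {x, y, z} ⊆ D.verts := by
  simp [Finset.insert_subset_iff, (D.adj_mem h.adj_xy).1, (D.adj_mem h.adj_yz).1,
    (D.adj_mem h.adj_zx).1]

theorem three_le_card (h : D.IsCompleteExceptTriangle x y z) : 3 ≤ D.verts.card := by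
  have := Finset.card_le_card h.triangle_subset
  rwa [Finset.card_eq_three.2 ⟨x, y, z, ne_of_adj h.adj_xy, (ne_of_adj h.adj_zx).symm,
    ne_of_adj h.adj_yz, rfl⟩] at this

theorem mem_of_acyclicOn_pair (h : D.IsCompleteExceptTriangle x y z) {u v : ℕ}
    (hu : u ∈ D.verts) (hv : v ∈ D.verts) (huv : u ≠ v)
    (hA : D.AcyclicOn {u, v}) : u ∈ ({x, y, z} : Finset ℕ) ∧ v ∈ ({x, y, z} : Finset ℕ) := by
  rw [acyclicOn_pair_iff, not_and_or] at hA
  rcases hA with hA | hA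
  · exact h.mem_of_not_adj hu hv huv hA
  · exact (h.mem_of_not_adj hv hu huv.symm hA).symm

theorem exists_not_adj_avoiding (h : D.IsCompleteExceptTriangle x y z) (w : ℕ) :
    ∃ a b, a ∈ ({x, y, z} : Finset ℕ) ∧ b ∈ ({x, y, z} : Finset ℕ) ∧ a ≠ b ∧ a ≠ w ∧ b ≠ w ∧
      ¬ D.Adj a b := by
  have hxy := ne_of_adj h.adj_xy
  have hyz := ne_of_adj h.adj_yz
  have hzx := ne_of_adj h.adj_zx
  by_cases hx : w = x
  · subst hx
    exact ⟨z, y, by simp, by simp, hyz.symm, hzx, hxy.symm, h.not_adj_zy⟩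
  by_cases hy : w = y
  · subst hy
    exact ⟨x, z, by simp, by simp, hzx.symm, hxy, hyz.symm, h.not_adj_xz⟩
  · exact ⟨y, x, by simp, by simp, hxy.symm, Ne.symm hy, Ne.symm hx, h.not_adj_yx⟩

theorem acyclicOn_delArc (h : D.IsCompleteExceptTriangle x y z) :
    (D.delArc x y).AcyclicOn {x, y, z} := by
  have hyz : (D.delArc x y).AcyclicOn {y, z} :=
    acyclicOn_pair_iff.2 fun hzy => h.not_adj_zy hzy.2.1
  refine hyz.insert_of_forall_not_adj ?_
  rintro w (rfl | rfl)
  exacts [fun hxy => hxy.2 ⟨rfl, rfl⟩, fun hxz => h.not_adj_xz hxz.1]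

theorem adj_of_not_mem (h : D.IsCompleteExceptTriangle x y z) {u v : ℕ} (hu : u ∈ D.verts)
    (hv : v ∈ D.verts) (huv : u ≠ v)
    (hT : u ∉ ({x, y, z} : Finset ℕ) ∨ v ∉ ({x, y, z} : Finset ℕ)) : D.Adj u v := by
  by_contra hn
  have := h.mem_of_not_adj hu hv huv hn
  tauto

theorem adj_iff_of_mem (h : D.IsCompleteExceptTriangle x y z) {u v : ℕ}
    (hu : u ∈ ({x, y, z} : Finset ℕ)) (hv : v ∈ ({x, y, z} : Finset ℕ)) :
    D.Adj u v ↔ u = x ∧ v = y ∨ u = y ∧ v = z ∨ u = z ∧ v = x := by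
  have hxy := ne_of_adj h.adj_xy
  have hyz := ne_of_adj h.adj_yz
  have hzx := ne_of_adj h.adj_zx
  simp only [Finset.mem_insert, Finset.mem_singleton] at hu hv
  rcases hu with rfl | rfl | rfl <;> rcases hv with rfl | rfl | rfl <;>
    simp [D.loopless, h.adj_xy, h.adj_yz, h.adj_zx, h.not_adj_yx, h.not_adj_zy, h.not_adj_xz,
      hxy, hyz, hzx, hxy.symm, hyz.symm, hzx.symm]

theorem not_acyclicOn (h : D.IsCompleteExceptTriangle x y z) : ¬ D.AcyclicOn {x, y, z} :=
  not_acyclicOn_of_adj_cycle h.adj_xy h.adj_yz h.adj_zx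

theorem dichrom_eq (h : D.IsCompleteExceptTriangle x y z) (hn : D.verts.card = k + 1) :
    D.dichrom = k := by
  have h3 := h.three_le_card
  have hsub := h.triangle_subset
  simp only [Finset.insert_subset_iff, Finset.singleton_subset_iff] at hsub
  refine le_antisymm (dichrom_le ?_) (not_lt.1 fun hlt => ?_)
  · have := (colorable_card_sub_one_iff (Finset.card_pos.1 (by omega))).2
      ⟨y, hsub.2.1, x, hsub.1, (ne_of_adj h.adj_xy).symm,
        acyclicOn_pair_iff.2 fun hyx => h.not_adj_yx hyx.1⟩
    rwa [hn, Nat.add_sub_cancel] at this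
  have hcol : D.Colorable (D.verts.card - 2) := colorable_iff_dichrom_le.2 (by omega)
  rcases (colorable_card_sub_two_iff (by omega)).1 hcol with
    ⟨a, ha, b, hb, c, hc, hab, hac, hbc, hA⟩ |
    ⟨a, ha, b, hb, c, hc, d, hd, hab, hcd, hac, had, hbc, hbd, hA₁, hA₂⟩
  · have hab' := h.mem_of_acyclicOn_pair ha hb hab (hA.mono fun w hw => by simp at hw ⊢; tauto)
    have hac' := h.mem_of_acyclicOn_pair ha hc hac (hA.mono fun w hw => by simp at hw ⊢; tauto)
    have hbc' := h.mem_of_acyclicOn_pair hb hc hbc (hA.mono fun w hw => by simp at hw ⊢; tauto)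
    simp only [Finset.mem_insert, Finset.mem_singleton] at hab' hac' hbc'
    exact h.not_acyclicOn (hA.mono fun w hw => by simp at hw ⊢; omega)
  · have hab' := h.mem_of_acyclicOn_pair ha hb hab hA₁
    have hcd' := h.mem_of_acyclicOn_pair hc hd hcd hA₂
    simp only [Finset.mem_insert, Finset.mem_singleton] at hab' hcd'
    omega

theorem exists_acyclicOn_triple_delArc (h : D.IsCompleteExceptTriangle x y z) {p q : ℕ}
    (hpq : D.Adj p q) (hp : p ∈ ({x, y, z} : Finset ℕ)) (hq : q ∈ ({x, y, z} : Finset ℕ)) :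
    ∃ a ∈ D.verts, ∃ b ∈ D.verts, ∃ c ∈ D.verts,
      a ≠ b ∧ a ≠ c ∧ b ≠ c ∧ (D.delArc p q).AcyclicOn {a, b, c} := by
  have key : ∀ {a b c}, D.IsCompleteExceptTriangle a b c → ∃ a' ∈ D.verts, ∃ b' ∈ D.verts,
      ∃ c' ∈ D.verts, a' ≠ b' ∧ a' ≠ c' ∧ b' ≠ c' ∧ (D.delArc a b).AcyclicOn {a', b', c'} :=
    fun {a b c} h => ⟨a, (D.adj_mem h.adj_xy).1, b, (D.adj_mem h.adj_yz).1, c,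
      (D.adj_mem h.adj_zx).1, ne_of_adj h.adj_xy, (ne_of_adj h.adj_zx).symm,
      ne_of_adj h.adj_yz, h.acyclicOn_delArc⟩
  simp only [Finset.mem_insert, Finset.mem_singleton] at hp hq
  rcases hp with rfl | rfl | rfl <;> rcases hq with rfl | rfl | rfl
  exacts [absurd hpq (D.loopless _), key h, absurd hpq h.not_adj_xz, absurd hpq h.not_adj_yx,
    absurd hpq (D.loopless _), key h.rotate, key h.rotate.rotate, absurd hpq h.not_adj_zy,
    absurd hpq (D.loopless _)]

theorem isCritical (h : D.IsCompleteExceptTriangle x y z) (hn : D.verts.card = k + 1) :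
    D.IsCritical k := by
  have h3 := h.three_le_card
  have hd := h.dichrom_eq hn
  refine ⟨hd, critical_of_forall_colorable (by omega) (fun v hv => ?_) fun p q hpq => ?_⟩
  · obtain ⟨a, b, ha, hb, hab, hav, hbv, hnab⟩ := h.exists_not_adj_avoiding v
    have hcard : (D.delVert v).verts.card = k := by
      simp [delVert, Finset.card_erase_of_mem hv, hn]
    have := (colorable_card_sub_one_iff (D := D.delVert v) (Finset.card_pos.1 (by omega))).2
      ⟨a, Finset.mem_erase.2 ⟨hav, h.triangle_subset ha⟩, b,
        Finset.mem_erase.2 ⟨hbv, h.triangle_subset hb⟩, hab,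
        acyclicOn_pair_iff.2 fun hh => hnab hh.1.1⟩
    rwa [hcard, ← hd] at this
  · have hcard : (D.delArc p q).verts.card = k + 1 := hn
    rw [hd, show k - 1 = (D.delArc p q).verts.card - 2 by omega]
    refine (colorable_card_sub_two_iff (by omega)).2 ?_
    by_cases hT : p ∈ ({x, y, z} : Finset ℕ) ∧ q ∈ ({x, y, z} : Finset ℕ)
    · exact Or.inl (h.exists_acyclicOn_triple_delArc hpq hT.1 hT.2)
    obtain ⟨a, b, ha, hb, hab, hap, haq, hbp, hbq, hnab⟩ : ∃ a b, a ∈ ({x, y, z} : Finset ℕ) ∧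
        b ∈ ({x, y, z} : Finset ℕ) ∧ a ≠ b ∧ a ≠ p ∧ a ≠ q ∧ b ≠ p ∧ b ≠ q ∧ ¬ D.Adj a b := by
      rcases not_and_or.1 hT with hp | hq
      · obtain ⟨a, b, ha, hb, hab, haq, hbq, hnab⟩ := h.exists_not_adj_avoiding q
        exact ⟨a, b, ha, hb, hab, fun e => hp (e ▸ ha), haq, fun e => hp (e ▸ hb), hbq, hnab⟩
      · obtain ⟨a, b, ha, hb, hab, hap, hbp, hnab⟩ := h.exists_not_adj_avoiding p
        exact ⟨a, b, ha, hb, hab, hap, fun e => hq (e ▸ ha), hbp, fun e => hq (e ▸ hb), hnab⟩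
    exact Or.inr ⟨p, (D.adj_mem hpq).1, q, (D.adj_mem hpq).2, a, h.triangle_subset ha, b,
      h.triangle_subset hb, ne_of_adj hpq, hab, hap.symm, hbp.symm, haq.symm, hbq.symm,
      acyclicOn_pair_iff.2 fun hh => hh.1.2 ⟨rfl, rfl⟩, acyclicOn_pair_iff.2 fun hh => hnab hh.1.1⟩

theorem exists_isDiracJoin (h : D.IsCompleteExceptTriangle x y z)
    (hn : D.verts.card = k + 1) :
    ∃ Dk C : Digraph', Dk.IsBiorientedComplete ∧ Dk.order = k - 2 ∧
      C.IsDirectedCycle ∧ C.order = 3 ∧ IsDiracJoin D Dk C := by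
  have hxy := ne_of_adj h.adj_xy
  have hyz := ne_of_adj h.adj_yz
  have hzx := ne_of_adj h.adj_zx
  have hT : ({x, y, z} : Finset ℕ).card = 3 :=
    Finset.card_eq_three.2 ⟨x, y, z, hxy, hzx.symm, hyz, rfl⟩
  have hCV : (D.induce {x, y, z}).verts = {x, y, z} := Finset.inter_eq_right.2 h.triangle_subset
  refine ⟨D.induce (D.verts \ {x, y, z}), D.induce {x, y, z}, fun u v => ?_, ?_,
    isDirectedCycle_of_adj_iff hxy hzx.symm hyz hCV fun u v => ?_, by rw [order, hCV, hT],
    isDiracJoin_induce_sdiff _ fun u hu v hv hu' hv' => ⟨?_, ?_⟩⟩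
  · simp only [induce, Finset.mem_inter, Finset.mem_sdiff]
    constructor
    · rintro ⟨huv, ⟨hu, hu'⟩, hv, hv'⟩
      exact ⟨⟨hu, hu, hu'⟩, ⟨hv, hv, hv'⟩, ne_of_adj huv⟩
    · rintro ⟨⟨hu, -, hu'⟩, ⟨hv, -, hv'⟩, huv⟩
      exact ⟨h.adj_of_not_mem hu hv huv (Or.inl hu'), ⟨hu, hu'⟩, hv, hv'⟩
  · change (D.verts ∩ (D.verts \ {x, y, z})).card = k - 2
    rw [Finset.inter_eq_right.2 Finset.sdiff_subset,
      Finset.card_sdiff_of_subset h.triangle_subset, hn, hT]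
    omega
  · refine ⟨fun ⟨huv, hu, hv⟩ => (h.adj_iff_of_mem hu hv).1 huv, fun huv => ?_⟩
    have hT : u ∈ ({x, y, z} : Finset ℕ) ∧ v ∈ ({x, y, z} : Finset ℕ) := by
      rcases huv with ⟨rfl, rfl⟩ | ⟨rfl, rfl⟩ | ⟨rfl, rfl⟩ <;> simp
    exact ⟨(h.adj_iff_of_mem hT.1 hT.2).2 huv, hT⟩
  · exact h.adj_of_not_mem hu hv (fun e => hu' (e ▸ hv')) (Or.inl hu')
  · exact h.adj_of_not_mem hv hu (fun e => hu' (e ▸ hv')) (Or.inr hu')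

end IsCompleteExceptTriangle

theorem IsDiracJoin.exists_isCompleteExceptTriangle {Dk C : Digraph'} (hj : IsDiracJoin D Dk C)
    (hDk : Dk.IsBiorientedComplete) (hC : C.IsDirectedCycle) (h3 : C.order = 3) :
    ∃ x y z, D.IsCompleteExceptTriangle x y z := by
  obtain ⟨hdisj, hV, hA⟩ := hj
  obtain ⟨x, y, z, hCV, hxy, hyz, hzx, hyx, hzy, hxz⟩ := hC.exists_of_order_eq_three h3
  have hC_Dk : ∀ {u}, u ∈ C.verts → u ∉ Dk.verts := fun hu hu' =>
    Finset.disjoint_left.1 hdisj hu' hu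
  have hadj : ∀ {u v}, C.Adj u v → D.Adj u v := fun h => (hA _ _).2 (Or.inr (Or.inl h))
  have hnadj : ∀ {u v}, ¬ C.Adj u v → u ∈ C.verts → v ∈ C.verts → ¬ D.Adj u v := by
    intro u v hn hu hv huv
    rcases (hA u v).1 huv with h | h | h | h
    exacts [hC_Dk hu (Dk.adj_mem h).1, hn h, hC_Dk hu h.1, hC_Dk hv h.2]
  have hmem : x ∈ C.verts ∧ y ∈ C.verts ∧ z ∈ C.verts := by simp [hCV]
  refine ⟨x, y, z, hadj hxy, hadj hyz, hadj hzx, hnadj hyx hmem.2.1 hmem.1,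
    hnadj hzy hmem.2.2 hmem.2.1, hnadj hxz hmem.1 hmem.2.2, fun u v hu hv huv hn => ?_⟩
  rw [← hCV]
  rw [hV, Finset.mem_union] at hu hv
  have hu' : u ∉ Dk.verts := fun hu' => hn <| (hA u v).2 <| by
    rcases hv with hv | hv
    exacts [Or.inl ((hDk u v).2 ⟨hu', hv, huv⟩), Or.inr (Or.inr (Or.inl ⟨hu', hv⟩))]
  have hv' : v ∉ Dk.verts := fun hv' => hn <| (hA u v).2 <| by
    rcases hu with hu | hu
    exacts [Or.inl ((hDk u v).2 ⟨hu, hv', huv⟩), Or.inr (Or.inr (Or.inr ⟨hu, hv'⟩))]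
  exact ⟨hu.resolve_left hu', hv.resolve_left hv'⟩

theorem exists_isCompleteExceptTriangle_of_not_acyclicOn (hxy : D.AcyclicOn {x, y})
    (hyz : D.AcyclicOn {y, z}) (hxz : D.AcyclicOn {x, z}) (hcyc : ¬ D.AcyclicOn {x, y, z})
    (hmiss : ∀ ⦃u v⦄, u ∈ D.verts → v ∈ D.verts → u ≠ v → ¬ D.Adj u v →
      (u = x ∨ u = y ∨ u = z) ∧ (v = x ∨ v = y ∨ v = z)) :
    ∃ a b c, D.IsCompleteExceptTriangle a b c := by
  have hxy' := acyclicOn_pair_iff.1 hxy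
  have hyz' := acyclicOn_pair_iff.1 hyz
  have hxz' := acyclicOn_pair_iff.1 hxz
  rcases adj_cycle_of_not_acyclicOn hxy hyz hxz hcyc with ⟨h₁, h₂, h₃⟩ | ⟨h₁, h₂, h₃⟩
  · refine ⟨x, y, z, h₁, h₂, h₃, fun h => hxy' ⟨h₁, h⟩, fun h => hyz' ⟨h₂, h⟩,
      fun h => hxz' ⟨h, h₃⟩, fun u v hu hv huv hn => ?_⟩
    simpa using hmiss hu hv huv hn
  · refine ⟨x, z, y, h₃, h₂, h₁, fun h => hxz' ⟨h₃, h⟩, fun h => hyz' ⟨h, h₂⟩,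
      fun h => hxy' ⟨h, h₁⟩, fun u v hu hv huv hn => ?_⟩
    have := hmiss hu hv huv hn
    simp only [Finset.mem_insert, Finset.mem_singleton]
    tauto

theorem IsCritical.exists_acyclicOn_pair_avoiding (h : D.IsCritical k) (hk : 0 < k)
    (hn : D.verts.card = k + 1) {w : ℕ} (hw : w ∈ D.verts) :
    ∃ a ∈ D.verts, ∃ b ∈ D.verts, a ≠ b ∧ a ≠ w ∧ b ≠ w ∧ D.AcyclicOn {a, b} := by
  have hcol := h.2.colorable_delVert hw
  have hcard : (D.delVert w).verts.card = k := by
    simp [delVert, Finset.card_erase_of_mem hw, hn]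
  rw [h.1, show k - 1 = (D.delVert w).verts.card - 1 by omega] at hcol
  obtain ⟨a, ha, b, hb, hab, hA⟩ :=
    (colorable_card_sub_one_iff (Finset.card_pos.1 (by omega))).1 hcol
  obtain ⟨haw, ha⟩ := Finset.mem_erase.1 ha
  obtain ⟨hbw, hb⟩ := Finset.mem_erase.1 hb
  have hne : ∀ u ∈ ({a, b} : Set ℕ), u ≠ w := by
    rintro u (rfl | rfl)
    exacts [haw, hbw]
  exact ⟨a, ha, b, hb, hab, haw, hbw,
    hA.of_adj_imp (E := D.delVert w) fun u hu v hv huv => ⟨huv, hne u hu, hne v hv⟩⟩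

theorem IsCritical.exists_isCompleteExceptTriangle (h : D.IsCritical k) (hk : 2 ≤ k)
    (hn : D.verts.card = k + 1) : ∃ x y z, D.IsCompleteExceptTriangle x y z := by
  have hnc : ¬ D.Colorable (D.verts.card - 2) := by
    rw [colorable_iff_dichrom_le, h.1]
    omega
  rw [colorable_card_sub_two_iff (by omega), not_or] at hnc
  obtain ⟨hno3, hno22⟩ := hnc
  push Not at hno3 hno22
  have havoid {w} (hw : w ∈ D.verts) := h.exists_acyclicOn_pair_avoiding (by omega) hn hw
  obtain ⟨x, y, z, hxy, hyz, hxz, hall⟩ := exists_triangle_of_pairwise_meet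
    (r := fun u v => u ∈ D.verts ∧ v ∈ D.verts ∧ u ≠ v ∧ D.AcyclicOn {u, v})
    (fun u v ⟨hu, hv, huv, hA⟩ => ⟨hv, hu, huv.symm, Set.pair_comm u v ▸ hA⟩)
    (fun u hu => hu.2.2.1 rfl)
    (fun a b c d ⟨ha, hb, hab, hA⟩ ⟨hc, hd, hcd, hA'⟩ => by
      by_contra! hne
      exact hno22 a ha b hb c hc d hd hab hcd hne.1 hne.2.1 hne.2.2.1 hne.2.2.2 hA hA')
    (by
      obtain ⟨w, hw⟩ := Finset.card_pos.1 (show 0 < D.verts.card by omega)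
      obtain ⟨a, ha, b, hb, hab, -, -, hA⟩ := havoid hw
      exact ⟨a, b, ha, hb, hab, hA⟩)
    fun a b hab => by
      obtain ⟨c, hc, d, hd, hcd, hca, hda, hA⟩ := havoid hab.1
      exact ⟨c, d, ⟨hc, hd, hcd, hA⟩, hca, hda⟩
  exact exists_isCompleteExceptTriangle_of_not_acyclicOn hxy.2.2.2 hyz.2.2.2 hxz.2.2.2
    (hno3 x hxy.1 y hyz.1 z hxz.2.1 hxy.2.2.1 hxz.2.2.1 hyz.2.2.1)
    fun u v hu hv huv hn => hall u v ⟨hu, hv, huv, acyclicOn_pair_iff.2 fun h => hn h.1⟩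

end Digraph'

/-- For `k ≥ 2`, the unique `k`-critical digraph on `k + 1` vertices is
`D^±(K_{k-2}) ⊞ C⃗₃`. -/
theorem stmt15 (k : ℕ) (hk : 2 ≤ k) (D : Digraph') :
    (D.IsCritical k ∧ D.order = k + 1) ↔
    ∃ Dk C : Digraph', Dk.IsBiorientedComplete ∧ Dk.order = k - 2 ∧
      C.IsDirectedCycle ∧ C.order = 3 ∧ Digraph'.IsDiracJoin D Dk C := by
  constructor
  · rintro ⟨hcrit, hn⟩
    obtain ⟨x, y, z, h⟩ := hcrit.exists_isCompleteExceptTriangle hk hn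
    exact h.exists_isDiracJoin hn
  · rintro ⟨Dk, C, hDk, hDkn, hC, hCn, hj⟩
    obtain ⟨x, y, z, h⟩ := hj.exists_isCompleteExceptTriangle hDk hC hCn
    have hn : D.order = k + 1 := by
      rw [order, hj.card_verts]
      rw [order] at hDkn hCn
      omega
    exact ⟨h.isCritical hn, hn⟩
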